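/- Let D₁, D₂ be complementary diagonal 0–1 projection matrices (D₁ + D₂ = I, D₁D₂ = 0) and C₁, C₂ symmetric positive definite with inverses P₁, P₂. If the covariance C = D₁C₁D₁ + D₂C₂D₂ is invertible, then C⁻¹ = Σ_{i=1,2} ( D_i P_i D_i − D_i P_i [(I − D_i) P_i (I − D_i)]^† P_i D_i ), where † denotes the Moore–Penrose pseudoinverse. -/

import Mathlib

/-!
Write `E = 1 - D` for a star projection `D`. Since `C * P = 1`, the block `D * C * D` times
`D * P * D` differs from `D` by a term through `E * P`, and the correction `D * P * Q * P * D`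
cancels it exactly because `E * P * Q = E`: the pseudoinverse `Q` of `E * P * E` lives on the range
of `E`, and `E * P * E` is onto that range because `P` is positive definite. The two cross blocks
vanish since `D * E = E * D = 0`, so the claimed matrix is a right inverse of the covariance.
-/

open Matrix

/-- A matrix `Q` is the Moore–Penrose pseudoinverse of `A` if it satisfies the
four Penrose conditions. -/
def IsMoorePenrose {N : ℕ} (A Q : Matrix (Fin N) (Fin N) ℝ) : Prop :=
  A * Q * A = A ∧ Q * A * Q = Q ∧ (A * Q)ᵀ = A * Q ∧ (Q * A)ᵀ = Q * A

theorem Matrix.PosDef.eq_zero_of_conjTranspose_mul_mul_eq_zero {m n R : Type*} [Fintype n]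
    [CommRing R] [PartialOrder R] [StarRing R] {P : Matrix n n R} (hP : P.PosDef)
    {B : Matrix n m R} (h : Bᴴ * P * B = 0) : B = 0 := by
  ext i j
  by_contra hij
  have hcol : (fun k => B k j) ≠ 0 := fun h0 => hij (congrFun h0 i)
  have hpos := hP.dotProduct_mulVec_pos hcol
  have hjj : star (fun k => B k j) ⬝ᵥ (P *ᵥ fun k => B k j) = (Bᴴ * P * B) j j := by
    simp only [mul_apply, dotProduct, mulVec, conjTranspose_apply, Pi.star_apply, Finset.sum_mul,
      Finset.mul_sum, mul_assoc]
    rw [Finset.sum_comm]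
  rw [hjj, h, zero_apply] at hpos
  exact hpos.false

theorem Matrix.IsDiag.isStarProjection {n R : Type*} [Fintype n] [DecidableEq n] [Semiring R]
    [StarRing R] [TrivialStar R] {D : Matrix n n R} (hD : D.IsDiag)
    (h01 : ∀ i, D i i = 0 ∨ D i i = 1) :
    IsStarProjection D := by
  rw [← hD.diagonal_diag]
  refine ⟨?_, ?_⟩
  · rw [IsIdempotentElem, diagonal_mul_diagonal]
    congr 1
    funext i
    rcases h01 i with h | h <;> simp [h]
  · rw [IsSelfAdjoint, star_eq_conjTranspose, diagonal_conjTranspose, star_trivial]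

section

variable {N : ℕ}

theorem IsStarProjection.transpose_eq {D : Matrix (Fin N) (Fin N) ℝ} (hD : IsStarProjection D) :
    Dᵀ = D :=
  (isHermitian_iff_isSymm.mp hD.isSelfAdjoint).eq

theorem IsStarProjection.transpose_mul_mul_self {E P : Matrix (Fin N) (Fin N) ℝ}
    (hE : IsStarProjection E) (hP : P.IsHermitian) : (E * P * E)ᵀ = E * P * E := by
  rw [transpose_mul, transpose_mul, hE.transpose_eq, (isHermitian_iff_isSymm.mp hP).eq, mul_assoc]

namespace IsMoorePenrose

variable {A Q : Matrix (Fin N) (Fin N) ℝ}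

theorem eq_mul_transpose_mul (hA : Aᵀ = A) (h : IsMoorePenrose A Q) : Q = A * (Qᵀ * Q) := by
  obtain ⟨-, hQAQ, -, hQA⟩ := h
  calc Q = Q * A * Q := hQAQ.symm
    _ = (Q * A)ᵀ * Q := by rw [hQA]
    _ = A * (Qᵀ * Q) := by rw [transpose_mul, hA, mul_assoc]

theorem mul_left_eq (hA : Aᵀ = A) (h : IsMoorePenrose A Q) {E : Matrix (Fin N) (Fin N) ℝ}
    (hE : E * A = A) : E * Q = Q := by
  rw [h.eq_mul_transpose_mul hA, ← mul_assoc, hE]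

/-- `M * Q` is the orthogonal projection onto the range of `M = E * P * E`, which is the range
of `E` because `P` is positive definite: the defect `R = E - M * Q` satisfies
`R * P * R = R * M * R = 0`. -/
theorem mul_eq_of_posDef {E P : Matrix (Fin N) (Fin N) ℝ} (hE : IsStarProjection E)
    (hP : P.PosDef) (h : IsMoorePenrose (E * P * E) Q) : E * P * E * Q = E := by
  set M := E * P * E with hM
  obtain ⟨hMQM, -, hMQ, -⟩ := h
  have hE2 : E * E = E := hE.isIdempotentElem
  have hEt : Eᵀ = E := hE.transpose_eq
  have hMt : Mᵀ = M := hE.transpose_mul_mul_self hP.isHermitian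
  have hEM : E * M = M := by rw [hM, ← mul_assoc, ← mul_assoc, hE2]
  have hME : M * E = M := by rw [hM, mul_assoc, hE2]
  have hMQE : M * Q * E = M * Q := by
    rw [← hMQ, transpose_mul, mul_assoc, hMt, hME]
  set R := E - M * Q with hR
  have hRt : Rᵀ = R := by rw [hR, transpose_sub, hEt, hMQ]
  have hRE : R * E = R := by rw [hR, sub_mul, hE2, hMQE]
  have hER : E * R = R := by rw [hR, mul_sub, hE2, ← mul_assoc, hEM]
  have hRM : R * M = 0 := by rw [hR, sub_mul, hEM, hMQM, sub_self]
  have hRPR : Rᴴ * P * R = 0 := by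
    rw [conjTranspose_eq_transpose_of_trivial, hRt]
    calc R * P * R = R * E * P * (E * R) := by rw [hRE, hER]
      _ = R * M * R := by rw [hM]; noncomm_ring
      _ = 0 := by rw [hRM, zero_mul]
  exact (sub_eq_zero.mp (hP.eq_zero_of_conjTranspose_mul_mul_eq_zero hRPR)).symm

end IsMoorePenrose

def blockPrecision (D P Q : Matrix (Fin N) (Fin N) ℝ) : Matrix (Fin N) (Fin N) ℝ :=
  D * P * D - D * P * Q * P * D

theorem mul_blockPrecision_self {D C P Q : Matrix (Fin N) (Fin N) ℝ} (hD : IsStarProjection D)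
    (hCP : C * P = 1) (hP : P.PosDef) (hQ : IsMoorePenrose ((1 - D) * P * (1 - D)) Q) :
    D * C * D * blockPrecision D P Q = D := by
  have hD2 : D * D = D := hD.isIdempotentElem
  have hE := hD.one_sub
  have hEQ : (1 - D) * Q = Q :=
    hQ.mul_left_eq (hE.transpose_mul_mul_self hP.isHermitian) <| by
      rw [← mul_assoc, ← mul_assoc, hE.isIdempotentElem]
  have hDQ : D * Q = 0 := by rw [← hEQ, ← mul_assoc, hD.mul_one_sub_self, zero_mul]
  have hEPQ : (1 - D) * P * Q = 1 - D := by
    conv_lhs => rw [← hEQ, ← mul_assoc]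
    exact hQ.mul_eq_of_posDef hE hP
  calc D * C * D * blockPrecision D P Q
      = D * C * (D * D) * P * D - D * C * (D * D) * P * Q * P * D := by
        rw [blockPrecision]; noncomm_ring
    _ = D * (C * P) * D - D * C * ((1 - D) * P) * D
        - (D * (C * P) * Q * P * D - D * C * ((1 - D) * P * Q) * P * D) := by
        rw [hD2]; noncomm_ring
    _ = D * D - D * Q * P * D := by rw [hCP, hEPQ]; noncomm_ring
    _ = D := by rw [hD2, hDQ]; noncomm_ring

theorem mul_blockPrecision_eq_zero {D E C P Q : Matrix (Fin N) (Fin N) ℝ} (h : E * D = 0) :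
    E * C * E * blockPrecision D P Q = 0 := by
  calc E * C * E * blockPrecision D P Q
      = E * C * (E * D) * (P * D - P * Q * P * D) := by rw [blockPrecision]; noncomm_ring
    _ = 0 := by rw [h, mul_zero, zero_mul]

end

theorem regional_precision_formula_general
    (N : ℕ) (D1 D2 C1 C2 P1 P2 Q1 Q2 : Matrix (Fin N) (Fin N) ℝ)
    (hD1diag : D1.IsDiag)
    (hD1zeroone : ∀ i, D1 i i = 0 ∨ D1 i i = 1)
    (hsum : D1 + D2 = 1)
    (hC1 : C1.PosDef)
    (hC2 : C2.PosDef)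
    (hP1 : P1 = C1⁻¹) (hP2 : P2 = C2⁻¹)
    (hQ1 : IsMoorePenrose ((1 - D1) * P1 * (1 - D1)) Q1)
    (hQ2 : IsMoorePenrose ((1 - D2) * P2 * (1 - D2)) Q2) :
    (D1 * C1 * D1 + D2 * C2 * D2)⁻¹
      = (D1 * P1 * D1 - D1 * P1 * Q1 * P1 * D1)
        + (D2 * P2 * D2 - D2 * P2 * Q2 * P2 * D2) := by
  obtain rfl : D2 = 1 - D1 := eq_sub_of_add_eq' hsum
  have hD1 := hD1diag.isStarProjection hD1zeroone
  have hCP1 : C1 * P1 = 1 := hP1 ▸ mul_nonsing_inv _ ((isUnit_iff_isUnit_det _).mp hC1.isUnit)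
  have hCP2 : C2 * P2 = 1 := hP2 ▸ mul_nonsing_inv _ ((isUnit_iff_isUnit_det _).mp hC2.isUnit)
  refine inv_eq_right_inv ?_
  change _ * (blockPrecision D1 P1 Q1 + blockPrecision (1 - D1) P2 Q2) = 1
  rw [add_mul, mul_add, mul_add, mul_blockPrecision_self hD1 hCP1 (hP1 ▸ hC1.inv) hQ1,
    mul_blockPrecision_eq_zero hD1.mul_one_sub_self,
    mul_blockPrecision_eq_zero hD1.one_sub_mul_self,
    mul_blockPrecision_self hD1.one_sub hCP2 (hP2 ▸ hC2.inv) hQ2,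
    add_zero, zero_add, add_sub_cancel]

/-- For complementary diagonal 0–1 projections D₁, D₂
(D₁ + D₂ = I, D₁D₂ = 0) and symmetric positive definite C₁, C₂ with inverses
P₁, P₂, if C = D₁C₁D₁ + D₂C₂D₂ is invertible then
C⁻¹ = Σᵢ ( DᵢPᵢDᵢ − DᵢPᵢ[(I−Dᵢ)Pᵢ(I−Dᵢ)]†PᵢDᵢ ),
where † is the Moore–Penrose pseudoinverse. -/
theorem regional_precision_formula
    (N : ℕ) (D1 D2 C1 C2 P1 P2 Q1 Q2 : Matrix (Fin N) (Fin N) ℝ)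
    (hD1diag : D1.IsDiag) (hD2diag : D2.IsDiag)
    (hD1zeroone : ∀ i, D1 i i = 0 ∨ D1 i i = 1)
    (hD2zeroone : ∀ i, D2 i i = 0 ∨ D2 i i = 1)
    (hsum : D1 + D2 = 1) (hprod : D1 * D2 = 0)
    (hD1ne : D1 ≠ 0) (hD2ne : D2 ≠ 0)
    (hC1 : C1.PosDef) (hC1sym : C1.IsSymm)
    (hC2 : C2.PosDef) (hC2sym : C2.IsSymm)
    (hP1 : P1 = C1⁻¹) (hP2 : P2 = C2⁻¹)
    (hQ1 : IsMoorePenrose ((1 - D1) * P1 * (1 - D1)) Q1)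
    (hQ2 : IsMoorePenrose ((1 - D2) * P2 * (1 - D2)) Q2)
    (hC : IsUnit (D1 * C1 * D1 + D2 * C2 * D2).det) :
    (D1 * C1 * D1 + D2 * C2 * D2)⁻¹
      = (D1 * P1 * D1 - D1 * P1 * Q1 * P1 * D1)
        + (D2 * P2 * D2 - D2 * P2 * Q2 * P2 * D2) :=
  regional_precision_formula_general N D1 D2 C1 C2 P1 P2 Q1 Q2 hD1diag hD1zeroone hsum hC1 hC2 hP1
    hP2 hQ1 hQ2
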